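/- arXiv:2111.00062 — 5 statements merged into one kernel-verified Lean document; each statement's English description precedes it below -/
import Mathlib

section
/- The hypergeometric tail Hyp(k,m,K,M) is non-decreasing in M: for all integers k, m, K, M with 0 ≤ m ≤ M and 0 ≤ K ≤ M, Hyp(k,m,K,M+1) ≥ Hyp(k,m,K,M). -/
/-- The hypergeometric tail `Hyp(k,m,K,M) = ∑_{j=0}^{k} C(K,j)·C(M−K,m−j)/C(M,m)`, with the
convention `C(N,n) = 0` for `n < 0` (encoded by the `if j ≤ m` guard for `m − j`). -/
noncomputable def Hyp (k m K M : ℕ) : ℝ :=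
  (∑ j ∈ Finset.range (k + 1),
      if j ≤ m then ((K.choose j : ℝ) * ((M - K).choose (m - j) : ℝ)) else 0) / (M.choose m)

/-!
For `m ≤ k` both sides equal `1` by Vandermonde's identity. Otherwise write `N = M - K` and let
`S(m)` be the numerator of `Hyp k m K M`. Pascal's rule applied to `C(N + 1, m + 1 - j)` and to
`C(M + 1, m + 1)` shows that `Hyp(k, m + 1, K, M + 1)` is the mediant of `Hyp(k, m, K, M)` and
`Hyp(k, m + 1, K, M)`, so it suffices that `Hyp` is non-increasing in the sample size. This
follows from the identity `(m + 1)·S(m + 1) + (k + 1)·C(K, k + 1)·C(N, m - k) = (M - m)·S(m)`,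
proved by induction on `k`, together with `(m + 1)·C(M, m + 1) = (M - m)·C(M, m)`.
-/

open Finset

theorem Nat.cast_choose_succ_mul {R : Type*} [CommRing R] (N n : ℕ) :
    (N.choose (n + 1) : R) * (n + 1) = N.choose n * (N - n) := by
  rcases lt_or_ge n N with h | h
  · rw [← Nat.cast_sub h.le, ← Nat.cast_succ, ← Nat.cast_mul, ← Nat.cast_mul,
      Nat.choose_succ_right_eq]
  · rw [Nat.choose_eq_zero_of_lt (by omega : N < n + 1)]
    obtain rfl | h := h.eq_or_lt
    · simp
    · simp [Nat.choose_eq_zero_of_lt h]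

theorem div_le_add_div_add_of_div_le {α : Type*} [Field α] [LinearOrder α]
    [IsStrictOrderedRing α] {a b c d : α} (hb : 0 < b) (hd : 0 < d) (h : a / b ≤ c / d) :
    a / b ≤ (c + a) / (d + b) := by
  rw [div_le_div_iff₀ hb hd] at h
  rw [div_le_div_iff₀ hb (add_pos hd hb)]
  linarith

/-- The numerator of `Hyp k m K (K + N)` provided `k ≤ m`; otherwise the truncated `m - j`
gives spurious terms. -/
noncomputable def tailCount (K N m k : ℕ) : ℝ :=
  ∑ j ∈ range (k + 1), (K.choose j : ℝ) * N.choose (m - j)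

theorem hyp_eq_tailCount_div {k m : ℕ} (K M : ℕ) (hkm : k ≤ m) :
    Hyp k m K M = tailCount K (M - K) m k / M.choose m := by
  unfold Hyp tailCount
  congr 1
  refine sum_congr rfl fun j hj => if_pos ?_
  have := mem_range.1 hj
  omega

theorem hyp_eq_one {k m K M : ℕ} (hmk : m ≤ k) (hm : m ≤ M) (hK : K ≤ M) :
    Hyp k m K M = 1 := by
  have hsum : (∑ j ∈ range (k + 1),
      if j ≤ m then (K.choose j : ℝ) * (M - K).choose (m - j) else 0) = M.choose m := by
    have hfilter : (range (k + 1)).filter (· ≤ m) = range (m + 1) := by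
      ext; simp only [mem_filter, mem_range]; omega
    rw [← sum_filter, hfilter]
    have vandermonde := Nat.add_choose_eq K (M - K) m
    rw [Nat.add_sub_cancel' hK, Nat.sum_antidiagonal_eq_sum_range_succ_mk] at vandermonde
    exact_mod_cast vandermonde.symm
  rw [Hyp, hsum, div_self (Nat.cast_ne_zero.2 (Nat.choose_pos hm).ne')]

theorem tailCount_succ_succ {k m : ℕ} (K N : ℕ) (hkm : k ≤ m) :
    tailCount K (N + 1) (m + 1) k = tailCount K N m k + tailCount K N (m + 1) k := by
  simp only [tailCount, ← sum_add_distrib, ← mul_add]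
  refine sum_congr rfl fun j hj => ?_
  rw [show m + 1 - j = m - j + 1 by have := mem_range.1 hj; omega, Nat.choose_succ_succ']
  push_cast
  ring

theorem succ_mul_tailCount_succ_add {k m : ℕ} (K N : ℕ) (hkm : k ≤ m) :
    (m + 1 : ℝ) * tailCount K N (m + 1) k + (k + 1) * K.choose (k + 1) * N.choose (m - k)
      = (K + N - m) * tailCount K N m k := by
  induction k with
  | zero =>
    simp only [tailCount, zero_add, sum_range_one, Nat.choose_zero_right, Nat.choose_one_right,
      Nat.cast_zero, Nat.cast_one, tsub_zero, one_mul]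
    linear_combination Nat.cast_choose_succ_mul (R := ℝ) N m
  | succ k ih =>
    have ih := ih (by omega)
    have tailCount_succ (n : ℕ) : tailCount K N n (k + 1)
        = tailCount K N n k + K.choose (k + 1) * N.choose (n - (k + 1)) := sum_range_succ _ _
    have hN := Nat.cast_choose_succ_mul (R := ℝ) N (m - (k + 1))
    rw [show m - (k + 1) + 1 = m - k by omega, Nat.cast_sub hkm] at hN
    have hK := Nat.cast_choose_succ_mul (R := ℝ) K (k + 1)
    rw [tailCount_succ, tailCount_succ, Nat.add_sub_add_right]
    push_cast at hN hK ⊢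
    linear_combination ih + K.choose (k + 1) * hN + N.choose (m - (k + 1)) * hK

theorem hyp_succ_le_of_le {k m K M : ℕ} (hkm : k ≤ m) (hmM : m < M) (hK : K ≤ M) :
    Hyp k (m + 1) K M ≤ Hyp k m K M := by
  rw [hyp_eq_tailCount_div K M (by omega), hyp_eq_tailCount_div K M hkm,
    div_le_div_iff₀ (by exact_mod_cast Nat.choose_pos hmM)
      (by exact_mod_cast Nat.choose_pos hmM.le)]
  set T₀ := tailCount K (M - K) m k
  set T₁ := tailCount K (M - K) (m + 1) k
  have key := succ_mul_tailCount_succ_add K (M - K) hkm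
  have hM := Nat.cast_choose_succ_mul (R := ℝ) M m
  rw [Nat.cast_sub hK, add_sub_cancel] at key
  have gap : (m + 1 : ℝ) * (T₀ * M.choose (m + 1)) - (m + 1) * (T₁ * M.choose m)
      = (k + 1) * K.choose (k + 1) * (M - K).choose (m - k) * M.choose m := by
    linear_combination T₀ * hM - (M.choose m : ℝ) * key
  exact le_of_mul_le_mul_left (sub_nonneg.1 (by rw [gap]; positivity)) (by positivity)

/-- The hypergeometric tail is non-decreasing in the population size `M`:
`Hyp(k,m,K,M+1) ≥ Hyp(k,m,K,M)` for `0 ≤ m ≤ M` and `0 ≤ K ≤ M`. -/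
theorem hyp_tail_mono_population (k m K M : ℕ) (hm : m ≤ M) (hK : K ≤ M) :
    Hyp k m K M ≤ Hyp k m K (M + 1) := by
  rcases le_or_gt m k with hmk | hkm
  · rw [hyp_eq_one hmk hm hK, hyp_eq_one hmk (by omega) (by omega)]
  obtain ⟨m, rfl⟩ := Nat.exists_eq_add_one_of_ne_zero (by omega : m ≠ 0)
  replace hkm : k ≤ m := by omega
  have mono := hyp_succ_le_of_le hkm hm hK
  rw [hyp_eq_tailCount_div K M (by omega), hyp_eq_tailCount_div K M hkm] at mono
  rw [hyp_eq_tailCount_div K M (by omega), hyp_eq_tailCount_div K (M + 1) (by omega),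
    show M + 1 - K = M - K + 1 by omega, tailCount_succ_succ K _ hkm, Nat.choose_succ_succ',
    Nat.cast_add]
  exact div_le_add_div_add_of_div_le (by exact_mod_cast Nat.choose_pos hm)
    (by exact_mod_cast Nat.choose_pos (by omega)) mono
end

section
/- For integers k, m, K, M satisfying 0 ≤ k < min(m,K) and m−k ≤ M−K, the hypergeometric tail is strictly decreasing in K: Hyp(k,m,K,M) > Hyp(k,m,K+1,M). -/
/-! Pascal's rule on both factors makes the tail `∑_{j ≤ k} C(K,j)·C(N+1,m−j)` exceed
`∑_{j ≤ k} C(K+1,j)·C(N,m−j)` by a telescoping sum `∑_{j ≤ k} (g j − g (j−1))` with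
`g j = C(K,j)·C(N,m−1−j)` and `g (−1) = 0`. Hence the drop of the tail from `K` to `K + 1`
(with `N + 1 = M − K`) is `C(K,k)·C(M−K−1,m−1−k)/C(M,m)`, which is positive as soon as
`k ≤ K` and `m − k ≤ M − K`. -/

open Finset

namespace Nat

theorem choose_mul_choose_add_choose_succ_mul_succ_choose (K N j a : ℕ) :
    K.choose j * N.choose (a + 1) + K.choose (j + 1) * (N + 1).choose (a + 1) =
      (K + 1).choose (j + 1) * N.choose (a + 1) + K.choose (j + 1) * N.choose a := by
  rw [choose_succ_succ N, choose_succ_succ K]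
  ring

theorem sum_range_choose_mul_choose_succ (K N : ℕ) {k m : ℕ} (hkm : k < m) :
    ∑ j ∈ range (k + 1), K.choose j * (N + 1).choose (m - j) =
      ∑ j ∈ range (k + 1), (K + 1).choose j * N.choose (m - j) +
        K.choose k * N.choose (m - 1 - k) := by
  induction k with
  | zero =>
    obtain ⟨a, rfl⟩ : ∃ a, m = a + 1 := ⟨m - 1, by omega⟩
    simp only [zero_add, sum_range_one, choose_zero_right, one_mul, Nat.sub_zero,
      add_tsub_cancel_right, choose_succ_succ N, add_comm]
  | succ k ih =>
    obtain ⟨a, rfl⟩ : ∃ a, m = k + 2 + a := ⟨m - k - 2, by omega⟩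
    have hm : k + 2 + a - (k + 1) = a + 1 := by omega
    have hm' : k + 2 + a - 1 - k = a + 1 := by omega
    have hm'' : k + 2 + a - 1 - (k + 1) = a := by omega
    rw [sum_range_succ, sum_range_succ _ (k + 1), ih (by omega), hm, hm', hm'', add_assoc,
      choose_mul_choose_add_choose_succ_mul_succ_choose, ← add_assoc]

end Nat

theorem hyp_eq_sum_div (k m K M : ℕ) (hkm : k ≤ m) :
    Hyp k m K M =
      ((∑ j ∈ range (k + 1), K.choose j * (M - K).choose (m - j) : ℕ) : ℝ) / M.choose m := by
  rw [Hyp, Nat.cast_sum]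
  congr 1
  refine sum_congr rfl fun j hj => ?_
  rw [if_pos (by simp at hj; omega), Nat.cast_mul]

-- Berkopec's identity
theorem hyp_sub_hyp_succ (k m K M : ℕ) (hkm : k < m) (hKM : K < M) :
    Hyp k m K M - Hyp k m (K + 1) M =
      (K.choose k * (M - K - 1).choose (m - 1 - k) : ℕ) / M.choose m := by
  obtain ⟨N, hN⟩ : ∃ N, M - K - 1 = N := ⟨_, rfl⟩
  have hMK : M - K = N + 1 := by omega
  have hMK' : M - (K + 1) = N := by omega
  rw [hyp_eq_sum_div _ _ _ _ hkm.le, hyp_eq_sum_div _ _ _ _ hkm.le, hN, hMK, hMK',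
    Nat.sum_range_choose_mul_choose_succ K _ hkm, ← sub_div, Nat.cast_add, add_sub_cancel_left]

/-- For `0 ≤ k < min(m,K)` and `m − k ≤ M − K`, the hypergeometric tail is strictly
decreasing in `K`: `Hyp(k,m,K,M) > Hyp(k,m,K+1,M)`. -/
theorem hyp_tail_strictAnti_K (k m K M : ℕ) (hk : k < min m K) (h : m - k ≤ M - K) :
    Hyp k m (K + 1) M < Hyp k m K M := by
  have hkm : k < m := lt_of_lt_of_le hk (min_le_left m K)
  have hkK : k ≤ K := (lt_of_lt_of_le hk (min_le_right m K)).le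
  have hKM : K < M := by omega
  rw [← sub_pos, hyp_sub_hyp_succ k m K M hkm hKM]
  have hden : 0 < M.choose m := Nat.choose_pos (by omega)
  have hnum : 0 < K.choose k * (M - K - 1).choose (m - 1 - k) :=
    Nat.mul_pos (Nat.choose_pos hkK) (Nat.choose_pos (by omega))
  positivity
end

section
/- Define HypInv(k,m,δ,M) = min{K : Hyp(k,m,K,M) ≤ δ} for 0 ≤ k < m ≤ M and δ ∈ (0,1), restricted to k < K ≤ M−m+k+1. For fixed m, δ, M in the regime where the hypergeometric tail is strictly decreasing in K (i.e., 0 ≤ k < min(m,K) and m−k ≤ M−K on the relevant range), the pseudo-inverse is strictly increasing in k: HypInv(k,m,δ,M) < HypInv(k+1,m,δ,M) whenever k+1 < m. -/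
/-- The hypergeometric tail pseudo-inverse `HypInv(k,m,δ,M) = min{K : Hyp(k,m,K,M) ≤ δ}`. -/
noncomputable def HypInv (k m : ℕ) (δ : ℝ) (M : ℕ) : ℕ :=
  sInf {K : ℕ | Hyp k m K M ≤ δ}

open Finset

theorem Nat.sum_range_choose_succ_mul (K n : ℕ) (f : ℕ → ℕ) :
    ∑ j ∈ range (n + 1), (K + 1).choose j * f j
      = ∑ j ∈ range (n + 1), K.choose j * f j + ∑ j ∈ range n, K.choose j * f (j + 1) := by
  rw [sum_range_succ', sum_range_succ' (fun j => K.choose j * f j)]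
  simp only [Nat.choose_succ_succ, add_mul, sum_add_distrib, Nat.choose_zero_right]
  ring

theorem Nat.succ_choose_sub {N m j : ℕ} (h : j < m) :
    (N + 1).choose (m - j) = N.choose (m - j) + N.choose (m - (j + 1)) := by
  obtain ⟨i, rfl⟩ := Nat.exists_eq_add_of_lt h
  rw [show j + i + 1 - j = i + 1 by omega, show j + i + 1 - (j + 1) = i by omega,
    Nat.choose_succ_succ, add_comm]

theorem Nat.sum_choose_mul_choose_shift {K N m k : ℕ} (h : k < m) :
    ∑ j ∈ range (k + 1), K.choose j * (N + 1).choose (m - j)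
        + K.choose (k + 1) * N.choose (m - (k + 1))
      = ∑ j ∈ range (k + 2), (K + 1).choose j * N.choose (m - j) := by
  have hpascal : ∑ j ∈ range (k + 1), K.choose j * (N + 1).choose (m - j)
      = ∑ j ∈ range (k + 1), K.choose j * N.choose (m - j)
        + ∑ j ∈ range (k + 1), K.choose j * N.choose (m - (j + 1)) := by
    rw [← sum_add_distrib]
    refine sum_congr rfl fun j hj => ?_
    rw [Nat.succ_choose_sub (by rw [mem_range] at hj; omega), mul_add]
  rw [hpascal, Nat.sum_range_choose_succ_mul, sum_range_succ _ (k + 1)]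
  ring

theorem Hyp_eq_sum_div {k m : ℕ} (K M : ℕ) (h : k ≤ m) :
    Hyp k m K M = ((∑ j ∈ range (k + 1), K.choose j * (M - K).choose (m - j) : ℕ) : ℝ)
      / M.choose m := by
  unfold Hyp
  push_cast
  congr 1
  exact sum_congr rfl fun j hj => if_pos (by rw [mem_range] at hj; omega)

theorem Hyp_le_Hyp_succ_succ {k m K M : ℕ} (hk : k < m) (hK : K < M) :
    Hyp k m K M ≤ Hyp (k + 1) m (K + 1) M := by
  rw [Hyp_eq_sum_div _ _ hk.le, Hyp_eq_sum_div _ _ hk]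
  gcongr
  have hshift := Nat.sum_choose_mul_choose_shift (K := K) (N := M - (K + 1)) hk
  rw [show M - (K + 1) + 1 = M - K by omega] at hshift
  rw [← hshift]
  exact Nat.le_add_right _ _

theorem Hyp_eq_one {k m K M : ℕ} (hK : K ≤ k) (hk : k ≤ m) (hm : m ≤ M) :
    Hyp k m K M = 1 := by
  have hvand : M.choose m = ∑ j ∈ range (k + 1), K.choose j * (M - K).choose (m - j) := by
    rw [← Nat.add_sub_of_le (hK.trans (hk.trans hm)), Nat.add_choose_eq,
      Nat.sum_antidiagonal_eq_sum_range_succ_mk, Nat.add_sub_cancel_left]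
    refine (sum_subset (range_subset_range.2 (by omega)) fun j hj hjk => ?_).symm
    rw [mem_range, not_lt] at hjk
    rw [Nat.choose_eq_zero_of_lt (by omega), zero_mul]
  rw [Hyp_eq_sum_div _ _ hk, ← hvand, div_self (by exact_mod_cast (Nat.choose_pos hm).ne')]

theorem Hyp_self_eq_zero {k m : ℕ} (M : ℕ) (hk : k < m) : Hyp k m M M = 0 := by
  rw [Hyp_eq_sum_div _ _ hk.le, Nat.sub_self, sum_eq_zero fun j hj => ?_, Nat.cast_zero, zero_div]
  rw [mem_range] at hj
  rw [Nat.choose_eq_zero_of_lt (show 0 < m - j by omega), mul_zero]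

theorem HypInv_le {k m K M : ℕ} {δ : ℝ} (h : Hyp k m K M ≤ δ) : HypInv k m δ M ≤ K :=
  Nat.sInf_le h

theorem Hyp_HypInv_le {k m M : ℕ} {δ : ℝ} (hk : k < m) (hδ : 0 ≤ δ) :
    Hyp k m (HypInv k m δ M) M ≤ δ :=
  Nat.sInf_mem (s := {K | Hyp k m K M ≤ δ}) ⟨M, by simpa [Hyp_self_eq_zero M hk] using hδ⟩

/-- For fixed `m`, `δ ∈ (0,1)`, `M` with `k + 1 < m ≤ M`, the hypergeometric tail
pseudo-inverse is strictly increasing in `k`: `HypInv(k,m,δ,M) < HypInv(k+1,m,δ,M)`. -/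
theorem hypInv_strictMono_k (k m M : ℕ) (δ : ℝ) (hk : k + 1 < m) (hm : m ≤ M)
    (hδ₀ : 0 < δ) (hδ₁ : δ < 1) :
    HypInv k m δ M < HypInv (k + 1) m δ M := by
  set K := HypInv (k + 1) m δ M
  have hKδ : Hyp (k + 1) m K M ≤ δ := Hyp_HypInv_le hk hδ₀.le
  have hKM : K ≤ M := HypInv_le (by rw [Hyp_self_eq_zero M hk]; exact hδ₀.le)
  have hkK : k + 1 < K := by
    by_contra! hK
    linarith [Hyp_eq_one hK hk.le hm]
  have hstep : Hyp k m (K - 1) M ≤ Hyp (k + 1) m K M := by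
    simpa [Nat.sub_add_cancel (by omega : 1 ≤ K)] using
      Hyp_le_Hyp_succ_succ (k := k) (K := K - 1) (M := M) (by omega) (by omega)
  have := HypInv_le (hstep.trans hKδ)
  omega
end

section
/- For integers K ≥ k+1 ≥ 1 and m, M in the valid range, the inequality Hyp(k+1,m,K,M) ≥ Hyp(k,m,K−1,M) holds, where Hyp is the hypergeometric tail function. -/
/-!
Pascal's rule, applied to `C(K, j)` on one side and to `C(M − K + 1, m − j)` on the other, gives
the exact identity `C(M,m)·(Hyp(k+1,m,K,M) − Hyp(k,m,K−1,M)) = C(K−1,k+1)·C(M−K,m−k−1)`,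
whose right-hand side is nonnegative.
-/

open Finset

theorem sum_range_choose_succ_mul_choose (a N k m : ℕ) (hkm : k < m) :
    ∑ j ∈ range (k + 2), (a + 1).choose j * N.choose (m - j) =
      ∑ j ∈ range (k + 1), a.choose j * (N + 1).choose (m - j) +
        a.choose (k + 1) * N.choose (m - (k + 1)) := by
  induction k with
  | zero =>
    obtain ⟨n, rfl⟩ : ∃ n, m = n + 1 := ⟨m - 1, by omega⟩
    simp only [zero_add, sum_range_succ, range_one, sum_singleton, Nat.choose_zero_right,
      tsub_zero, one_mul, Nat.choose_succ_succ', Nat.choose_one_right, add_tsub_cancel_right]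
    ring
  | succ k ih =>
    obtain ⟨n, rfl⟩ : ∃ n, m = n + (k + 2) := ⟨m - (k + 2), by omega⟩
    have hpascal : (N + 1).choose (n + (k + 2) - (k + 1)) =
        N.choose (n + (k + 2) - (k + 1)) + N.choose (n + (k + 2) - (k + 2)) := by
      rw [show n + (k + 2) - (k + 1) = n + 1 by omega, show n + (k + 2) - (k + 2) = n by omega,
        Nat.choose_succ_succ', add_comm]
    rw [sum_range_succ _ (k + 2), ih (by omega), sum_range_succ _ (k + 1), hpascal,
      Nat.choose_succ_succ' a (k + 1)]
    ring

theorem Hyp_eq_of_le {k m : ℕ} (K M : ℕ) (hkm : k ≤ m) :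
    Hyp k m K M = ((∑ j ∈ range (k + 1), K.choose j * (M - K).choose (m - j) : ℕ) : ℝ) /
      M.choose m := by
  rw [Hyp]
  push_cast
  congr 1
  refine sum_congr rfl fun j hj => if_pos ?_
  rw [mem_range] at hj
  omega

theorem Hyp_succ_eq_Hyp_pred_add {k m K M : ℕ} (hkm : k + 1 ≤ m) (hK : 0 < K) (hKM : K ≤ M) :
    Hyp (k + 1) m K M = Hyp k m (K - 1) M +
      ((K - 1).choose (k + 1) * (M - K).choose (m - (k + 1)) : ℕ) / M.choose m := by
  obtain ⟨a, rfl⟩ : ∃ a, K = a + 1 := ⟨K - 1, by omega⟩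
  rw [Hyp_eq_of_le _ _ hkm, Hyp_eq_of_le _ _ (by omega), ← add_div, ← Nat.cast_add,
    Nat.add_sub_cancel, show M - a = M - (a + 1) + 1 by omega,
    sum_range_choose_succ_mul_choose _ _ _ _ (by omega)]

theorem hyp_tail_shift_ineq_general (k m K M : ℕ) (hK : k + 1 ≤ K) (hk : k + 1 < m)
    (hKM : K ≤ M) :
    Hyp k m (K - 1) M ≤ Hyp (k + 1) m K M := by
  rw [Hyp_succ_eq_Hyp_pred_add hk.le (by omega) hKM]
  exact le_add_of_nonneg_right (by positivity)

/-- For `K ≥ k + 1 ≥ 1` (and `k + 1 < m ≤ M`, `K ≤ M` in the valid range),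
`Hyp(k+1,m,K,M) ≥ Hyp(k,m,K−1,M)`. -/
theorem hyp_tail_shift_ineq (k m K M : ℕ) (hK : k + 1 ≤ K) (hk : k + 1 < m)
    (hm : m ≤ M) (hKM : K ≤ M) :
    Hyp k m (K - 1) M ≤ Hyp (k + 1) m K M :=
  hyp_tail_shift_ineq_general k m K M hK hk hKM
end

section
/- (Binomial tail inversion bound) Let h be a fixed classifier with true risk p = R_D(h) ∈ [0,1], and let S be an i.i.d. sample of m examples so that the number of errors k_S(h) = m·R_S(h) is a Binomial(m, p) random variable. Define BinInv(m,k,δ) = min{q ∈ (0,1) : Bin(m,k,q) ≤ δ} for k < m and BinInv(m,m,δ) = 1, where Bin(m,k,q) = ∑_{j=0}^{k} C(m,j)·q^j·(1−q)^{m−j}. Then for every δ ∈ (0,1), P[ p ≤ BinInv(m, k_S(h), δ) ] > 1 − δ. -/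
/-- The binomial tail `Bin(m,k,q) = ∑_{j=0}^{k} C(m,j)·q^j·(1−q)^{m−j}`. -/
noncomputable def Bin (m k : ℕ) (q : ℝ) : ℝ :=
  ∑ j ∈ Finset.range (k + 1), (m.choose j : ℝ) * q ^ j * (1 - q) ^ (m - j)

/-- The binomial tail inversion `BinInv(m,k,δ) = min{q ∈ (0,1) : Bin(m,k,q) ≤ δ}` for
`k < m`, and `BinInv(m,m,δ) = 1`. -/
noncomputable def BinInv (m k : ℕ) (δ : ℝ) : ℝ :=
  if k < m then sInf {q : ℝ | q ∈ Set.Ioo (0 : ℝ) 1 ∧ Bin m k q ≤ δ} else 1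

/-! The errors `j` with `BinInv m j δ < p` all lie below the largest such `κ`, so their total
probability is at most `Bin m κ p`. As a sum of Bernstein polynomials, `Bin m κ` has derivative
`-m · b_{m-1,κ}` (the derivatives telescope), so it is strictly decreasing on `[0, 1]` when
`κ < m`; since some `q < p` has `Bin m κ q ≤ δ`, this gives `Bin m κ p < δ`. -/

open Finset Polynomial Filter Topology

theorem derivative_sum_range_bernsteinPolynomial {R : Type*} [CommRing R] (n k : ℕ) :
    derivative (∑ ν ∈ range (k + 1), bernsteinPolynomial R n ν)
      = -n * bernsteinPolynomial R (n - 1) k := by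
  induction k with
  | zero => simp [bernsteinPolynomial.derivative_zero]
  | succ k ih =>
    rw [sum_range_succ, derivative_add, ih, bernsteinPolynomial.derivative_succ]
    ring

theorem bernsteinPolynomial_eval_pos {n ν : ℕ} (h : ν ≤ n) {x : ℝ} (hx : x ∈ Set.Ioo 0 1) :
    0 < (bernsteinPolynomial ℝ n ν).eval x := by
  obtain ⟨hx0, hx1⟩ := hx
  have : 0 < 1 - x := sub_pos.2 hx1
  have : (0 : ℝ) < n.choose ν := by exact_mod_cast Nat.choose_pos h
  simp only [bernsteinPolynomial, eval_mul, eval_pow, eval_natCast, eval_sub, eval_one, eval_X]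
  positivity

theorem bin_eq_eval (m k : ℕ) (q : ℝ) :
    Bin m k q = (∑ ν ∈ range (k + 1), bernsteinPolynomial ℝ m ν).eval q := by
  simp [Bin, eval_finsetSum, bernsteinPolynomial]

theorem bin_self (m : ℕ) (q : ℝ) : Bin m m q = 1 := by
  rw [bin_eq_eval, bernsteinPolynomial.sum, eval_one]

theorem bin_one {m k : ℕ} (hk : k < m) : Bin m k 1 = 0 := by
  rw [bin_eq_eval, eval_finsetSum]
  refine sum_eq_zero fun ν hν => ?_
  rw [bernsteinPolynomial.eval_at_1, if_neg]
  have := mem_range.1 hν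
  omega

theorem continuous_bin (m k : ℕ) : Continuous (Bin m k) := by
  simp_rw [funext (bin_eq_eval m k)]
  exact Polynomial.continuous _

theorem hasDerivAt_bin (m k : ℕ) (q : ℝ) :
    HasDerivAt (Bin m k) (-m * (bernsteinPolynomial ℝ (m - 1) k).eval q) q := by
  simp_rw [funext (bin_eq_eval m k)]
  have := Polynomial.hasDerivAt (∑ ν ∈ range (k + 1), bernsteinPolynomial ℝ m ν) q
  rwa [derivative_sum_range_bernsteinPolynomial, eval_mul, eval_neg, eval_natCast] at this

theorem bin_strictAntiOn {m k : ℕ} (hk : k < m) : StrictAntiOn (Bin m k) (Set.Icc 0 1) := by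
  refine strictAntiOn_of_deriv_neg (convex_Icc 0 1) (continuous_bin m k).continuousOn
    fun q hq => ?_
  rw [interior_Icc] at hq
  rw [(hasDerivAt_bin m k q).deriv, neg_mul, neg_lt_zero]
  have : (0 : ℝ) < m := by exact_mod_cast (k.zero_le.trans_lt hk)
  have := bernsteinPolynomial_eval_pos (Nat.le_sub_one_of_lt hk) hq
  positivity

theorem binInv_set_nonempty {m k : ℕ} (hk : k < m) {δ : ℝ} (hδ : 0 < δ) :
    {q : ℝ | q ∈ Set.Ioo 0 1 ∧ Bin m k q ≤ δ}.Nonempty := by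
  have near_one : ∀ᶠ q in 𝓝[<] (1 : ℝ), Bin m k q < δ :=
    ((continuous_bin m k).continuousAt.eventually_lt_const (by rwa [bin_one hk])).filter_mono
      nhdsWithin_le_nhds
  obtain ⟨q, hδq, hq⟩ := (near_one.and (Ioo_mem_nhdsLT zero_lt_one)).exists
  exact ⟨q, hq, hδq.le⟩

theorem bin_lt_of_binInv_lt {m k : ℕ} {p δ : ℝ} (hp : p ∈ Set.Icc 0 1) (hδ : 0 < δ)
    (h : BinInv m k δ < p) : Bin m k p < δ := by
  have hk : k < m := by
    by_contra hk
    rw [BinInv, if_neg hk] at h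
    exact h.not_ge hp.2
  rw [BinInv, if_pos hk] at h
  obtain ⟨q, ⟨hq, hqδ⟩, hqp⟩ := exists_lt_of_csInf_lt (binInv_set_nonempty hk hδ) h
  exact (bin_strictAntiOn hk (Set.Ioo_subset_Icc_self hq) hp hqp).trans_le hqδ

theorem sum_binomial_filter_binInv_lt_lt {m : ℕ} {p δ : ℝ} (hp : p ∈ Set.Icc 0 1) (hδ : 0 < δ) :
    ∑ j ∈ (range (m + 1)).filter (fun j => BinInv m j δ < p),
      (m.choose j : ℝ) * p ^ j * (1 - p) ^ (m - j) < δ := by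
  set T := (range (m + 1)).filter (fun j => BinInv m j δ < p)
  rcases T.eq_empty_or_nonempty with hT | hT
  · rwa [hT, sum_empty]
  have hκ := (mem_filter.1 (T.max'_mem hT)).2
  have hp' : 0 ≤ 1 - p := sub_nonneg.2 hp.2
  calc ∑ j ∈ T, (m.choose j : ℝ) * p ^ j * (1 - p) ^ (m - j)
      ≤ Bin m (T.max' hT) p :=
        sum_le_sum_of_subset_of_nonneg
          (fun j hj => mem_range.2 (Nat.lt_succ_of_le (T.le_max' j hj)))
          fun j _ _ => by have := hp.1; positivity
    _ < δ := bin_lt_of_binInv_lt hp hδ hκ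

/-- The left side is `P[p ≤ BinInv(m, X, δ)]` for `X ~ Binomial(m, p)`, expanded over the
values `X = j`. -/
theorem binomial_tail_inversion_bound (m : ℕ) (p δ : ℝ)
    (hp : p ∈ Set.Icc (0 : ℝ) 1) (hδ : δ ∈ Set.Ioo (0 : ℝ) 1) :
    (1 : ℝ) - δ
      < ∑ j ∈ Finset.range (m + 1),
          (m.choose j : ℝ) * p ^ j * (1 - p) ^ (m - j)
            * (if p ≤ BinInv m j δ then 1 else 0) := by
  have total := sum_filter_add_sum_filter_not (range (m + 1)) (fun j => p ≤ BinInv m j δ)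
    fun j => (m.choose j : ℝ) * p ^ j * (1 - p) ^ (m - j)
  simp only [not_le] at total
  rw [← Bin, bin_self] at total
  have tail := sum_binomial_filter_binInv_lt_lt (m := m) hp hδ.1
  simp only [mul_ite, mul_one, mul_zero, ← sum_filter]
  linarith
end
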